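/- Change-of-basis identities (Theorem 5.12): let q, α, y ∈ ℂ with 0 < |q| < 1 and α ≠ 0, and let d ≥ 2 be an integer. Define d×d complex matrices U = (U_{k,ℓ}) and W = (W_{k,ℓ}) indexed by k, ℓ ∈ {0, 1, …, d−1} by U_{k,ℓ} := ∑_{n ≥ ε(k,ℓ)} αⁿ · q^{d·n(n−1)/2 + kn} · y^{dn+k−ℓ}/(q;q)_{dn+k−ℓ} and W_{k,ℓ} := ∑_{n ≥ ε(k,ℓ)} αⁿ · q^{(d(d−1)/2)·n² + (d(k−ℓ−1)+ℓ)·n + (k−ℓ)(k−ℓ−1)/2} · (−y)^{dn+k−ℓ}/(q;q)_{dn+k−ℓ}, where ε(k,ℓ) := 1 if ℓ > k and ε(k,ℓ) := 0 otherwise (so every exponent dn+k−ℓ appearing is a nonnegative integer, and all series converge absolutely). Then det U = 1, det W = 1, and the product W·U equals the d×d identity matrix except that its (0, d−1) entry is −α·y·q^{−1} instead of 0 (for d = 2 this means W·U = [[1, −αy/q],[0, 1]]). -/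

import Mathlib

/-!
Write `T(y) = 1 - y N` with `N` the lower shift matrix and `τ(c) = 1 + c E₀,d₋₁` for the corner
transvection. Applied termwise, the `q`-difference equation
`y^m/(q;q)_m - (q y)^m/(q;q)_m = y · y^(m-1)/(q;q)_(m-1)` of the `q`-exponential gives
`U(y) T(y) = U(q y) τ(α y)` and `τ(α y / q) W(y) = T(y) W(q y)`. As `T` and `τ` are unipotent,
`det U` and `det W` are invariant under `y ↦ q y`, hence equal their value `det 1 = 1` at `y = 0`.
The same two identities give `Δ(y) = L(y) Δ(q y) R(y)` for `Δ(y) = W(y) U(y) - τ(-α y / q)`, with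
`‖L(y)‖, ‖R(y)‖ ≤ exp (C ‖y‖)` in the `L¹-L∞` operator norm. Along `qⁿ y → 0` these factors have
a bounded product while `Δ(qⁿ y) → Δ(0) = 0`, so `Δ(y) = 0`.
-/

open scoped BigOperators

noncomputable section

/-- `(a; q)_n := ∏_{k=0}^{n-1} (1 - q^k a)`. -/
def qPochFin (q a : ℂ) (n : ℕ) : ℂ := ∏ k ∈ Finset.range n, (1 - q ^ k * a)

/-- `ε(k,ℓ) = 1` if `ℓ > k`, else `0`. -/
def eps {d : ℕ} (k l : Fin d) : ℕ := if k < l then 1 else 0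

/-- `U_{k,ℓ} := ∑_{n ≥ ε(k,ℓ)} αⁿ q^{d n(n−1)/2 + kn} y^{dn+k−ℓ}/(q;q)_{dn+k−ℓ}`,
written as a sum over `n : ℕ` of the term at `n + ε(k,ℓ)`. -/
def Umat (q α y : ℂ) (d : ℕ) : Matrix (Fin d) (Fin d) ℂ :=
  Matrix.of fun k l =>
    ∑' n : ℕ,
      α ^ (n + eps k l) *
        q ^ (d * ((n + eps k l) * (n + eps k l - 1) / 2) + (k : ℕ) * (n + eps k l)) *
        y ^ (d * (n + eps k l) + (k : ℕ) - (l : ℕ)) /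
        qPochFin q q (d * (n + eps k l) + (k : ℕ) - (l : ℕ))

/-- `W_{k,ℓ} := ∑_{n ≥ ε(k,ℓ)} αⁿ q^{(d(d−1)/2)n² + (d(k−ℓ−1)+ℓ)n + (k−ℓ)(k−ℓ−1)/2}
(−y)^{dn+k−ℓ}/(q;q)_{dn+k−ℓ}`, written as a sum over `n : ℕ` of the term at `n + ε(k,ℓ)`. -/
def Wmat (q α y : ℂ) (d : ℕ) : Matrix (Fin d) (Fin d) ℂ :=
  Matrix.of fun k l =>
    ∑' n : ℕ,
      α ^ (n + eps k l) *
        q ^ (((d * (d - 1) / 2 : ℕ) : ℤ) * ((n + eps k l : ℕ) : ℤ) ^ 2 +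
              ((d : ℤ) * (((k : ℕ) : ℤ) - ((l : ℕ) : ℤ) - 1) + ((l : ℕ) : ℤ)) *
                ((n + eps k l : ℕ) : ℤ) +
              (((k : ℕ) : ℤ) - ((l : ℕ) : ℤ)) * ((((k : ℕ) : ℤ) - ((l : ℕ) : ℤ)) - 1) / 2) *
        (-y) ^ (d * (n + eps k l) + (k : ℕ) - (l : ℕ)) /
        qPochFin q q (d * (n + eps k l) + (k : ℕ) - (l : ℕ))

open Filter Topology Finset

section qOrbit

variable {𝕜 : Type*} [NormedField 𝕜] {q : 𝕜}

lemma tendsto_pow_mul_nhds_zero (hq : ‖q‖ < 1) (y : 𝕜) :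
    Tendsto (fun n : ℕ => q ^ n * y) atTop (𝓝 0) := by
  simpa using (tendsto_pow_atTop_nhds_zero_of_norm_lt_one hq).mul_const y

lemma apply_eq_apply_zero_of_apply_mul_eq {X : Type*} [TopologicalSpace X] [T2Space X]
    {f : 𝕜 → X} (hq : ‖q‖ < 1) (hf : ∀ z, f (q * z) = f z) (hf0 : ContinuousAt f 0) (y : 𝕜) :
    f y = f 0 := by
  have horbit : ∀ n : ℕ, f (q ^ n * y) = f y := fun n => by
    induction n with
    | zero => simp
    | succ n ih => rw [pow_succ', mul_assoc, hf, ih]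
  have := hf0.tendsto.comp (tendsto_pow_mul_nhds_zero hq y)
  simp only [Function.comp_def, horbit] at this
  exact tendsto_const_nhds_iff.1 this

lemma le_zero_of_le_exp_mul_succ {b ε : ℕ → ℝ} (hε : Summable ε)
    (hb : ∀ n, b n ≤ Real.exp (ε n) * b (n + 1)) (hlim : Tendsto b atTop (𝓝 0)) : b 0 ≤ 0 := by
  have hpartial : ∀ N, b 0 ≤ Real.exp (∑ i ∈ range N, ε i) * b N := fun N => by
    induction N with
    | zero => simp
    | succ N ih =>
      calc b 0 ≤ Real.exp (∑ i ∈ range N, ε i) * b N := ih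
        _ ≤ Real.exp (∑ i ∈ range N, ε i) * (Real.exp (ε N) * b (N + 1)) := by gcongr; exact hb N
        _ = Real.exp (∑ i ∈ range (N + 1), ε i) * b (N + 1) := by
          rw [sum_range_succ, Real.exp_add, mul_assoc]
  have hprod := ((Real.continuous_exp.tendsto _).comp hε.tendsto_sum_tsum_nat).mul hlim
  rw [mul_zero] at hprod
  exact ge_of_tendsto' hprod hpartial

lemma eq_zero_of_norm_le_exp_mul_norm_mul {E : Type*} [NormedAddCommGroup E] {f : 𝕜 → E}
    (hq : ‖q‖ < 1) {c : ℝ} (hf : ∀ z, ‖f z‖ ≤ Real.exp (c * ‖z‖) * ‖f (q * z)‖)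
    (hf0 : Tendsto f (𝓝 0) (𝓝 0)) (y : 𝕜) : f y = 0 := by
  have h := le_zero_of_le_exp_mul_succ (b := fun n => ‖f (q ^ n * y)‖)
    ((summable_geometric_of_lt_one (norm_nonneg q) hq).mul_left (c * ‖y‖)) (fun n => ?_)
    (tendsto_zero_iff_norm_tendsto_zero.1 (hf0.comp (tendsto_pow_mul_nhds_zero hq y)))
  · simpa using h
  · convert hf (q ^ n * y) using 3
    · rw [norm_mul, norm_pow]; ring
    · rw [pow_succ', mul_assoc]

end qOrbit

section normBounds

variable {𝕜 A : Type*} [NormedField 𝕜] [NormedRing A] [NormOneClass A]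

lemma norm_one_add_smul_le_exp [NormedAlgebra 𝕜 A] (c : 𝕜) (a : A) :
    ‖1 + c • a‖ ≤ Real.exp (‖c‖ * ‖a‖) :=
  calc ‖1 + c • a‖ ≤ 1 + ‖c‖ * ‖a‖ := by
        rw [← norm_one (α := A)]; exact (norm_add_le _ _).trans (by gcongr; exact norm_smul_le c a)
    _ ≤ Real.exp (‖c‖ * ‖a‖) := by linarith [Real.add_one_le_exp (‖c‖ * ‖a‖)]

lemma geom_sum_le_one_add_pow {t : ℝ} (ht : 0 ≤ t) (n : ℕ) :
    ∑ i ∈ range n, t ^ i ≤ (1 + t) ^ n := by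
  induction n with
  | zero => simp
  | succ n ih =>
    rw [geom_sum_succ, pow_succ]
    nlinarith [one_le_pow₀ (by linarith : 1 ≤ 1 + t) (n := n)]

lemma norm_geom_sum_le_exp (a : A) (n : ℕ) :
    ‖∑ i ∈ range n, a ^ i‖ ≤ Real.exp (n * ‖a‖) :=
  calc ‖∑ i ∈ range n, a ^ i‖ ≤ ∑ i ∈ range n, ‖a‖ ^ i :=
        (norm_sum_le _ _).trans (sum_le_sum fun i _ => norm_pow_le a i)
    _ ≤ (1 + ‖a‖) ^ n := geom_sum_le_one_add_pow (norm_nonneg a) n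
    _ ≤ Real.exp ‖a‖ ^ n := by gcongr; linarith [Real.add_one_le_exp ‖a‖]
    _ = Real.exp (n * ‖a‖) := (Real.exp_nat_mul _ n).symm

end normBounds

lemma summable_pow_mul_zpow (C : ℝ) {ρ : ℝ} (hρ0 : 0 < ρ) (hρ1 : ρ < 1) {E : ℕ → ℤ}
    (hE : Tendsto (fun n => E (n + 1) - E n) atTop atTop) :
    Summable fun n => C ^ n * ρ ^ E n := by
  obtain ⟨K, hK⟩ := exists_pow_lt_of_lt_one (by positivity : 0 < 1 / (2 * (|C| + 1))) hρ1
  refine summable_of_ratio_norm_eventually_le (r := 1 / 2) (by norm_num) ?_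
  filter_upwards [hE.eventually_ge_atTop (K : ℤ)] with n hn
  have hratio : |C| * ρ ^ (E (n + 1) - E n) ≤ 1 / 2 :=
    calc |C| * ρ ^ (E (n + 1) - E n) ≤ (|C| + 1) * (1 / (2 * (|C| + 1))) := by
          gcongr
          · linarith
          · rw [← zpow_natCast] at hK
            exact (zpow_le_zpow_right_of_le_one₀ hρ0 hρ1.le hn).trans hK.le
      _ = 1 / 2 := by field_simp
  have hnorm : ‖C ^ (n + 1) * ρ ^ E (n + 1)‖ =
      |C| * ρ ^ (E (n + 1) - E n) * ‖C ^ n * ρ ^ E n‖ := by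
    rw [← sub_add_cancel (E (n + 1)) (E n), zpow_add₀ hρ0.ne', add_sub_cancel_right]
    simp only [norm_mul, norm_pow, Real.norm_eq_abs, abs_zpow, abs_of_pos hρ0]
    ring
  rw [hnorm]
  exact mul_le_mul_of_nonneg_right hratio (norm_nonneg _)

lemma Matrix.transvection_eq_one_add_smul {n R : Type*} [DecidableEq n] [CommRing R] (i j : n)
    (c : R) : Matrix.transvection i j c = 1 + c • Matrix.single i j 1 := by
  rw [Matrix.transvection, Matrix.smul_single, smul_eq_mul, mul_one]

section lowerShift

variable (R : Type*) (d : ℕ)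

def lowerShift [Zero R] [One R] : Matrix (Fin d) (Fin d) R :=
  Matrix.of fun i j => if (i : ℕ) = j + 1 then 1 else 0

variable {R d}

lemma mul_lowerShift_apply [NonAssocSemiring R] (A : Matrix (Fin d) (Fin d) R) (i j : Fin d) :
    (A * lowerShift R d) i j = if h : (j : ℕ) + 1 < d then A i ⟨j + 1, h⟩ else 0 := by
  simp only [Matrix.mul_apply, lowerShift, Matrix.of_apply, mul_ite, mul_one, mul_zero]
  split_ifs with h
  · rw [sum_eq_single ⟨j + 1, h⟩ (fun b _ hb => if_neg fun hb' => hb (Fin.ext hb')) (by simp)]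
    simp
  · exact sum_eq_zero fun b _ => if_neg (by have := b.isLt; omega)

lemma lowerShift_mul_apply [NonAssocSemiring R] (A : Matrix (Fin d) (Fin d) R) (i j : Fin d) :
    (lowerShift R d * A) i j = if h : 0 < (i : ℕ) then A ⟨i - 1, by omega⟩ j else 0 := by
  simp only [Matrix.mul_apply, lowerShift, Matrix.of_apply, ite_mul, one_mul, zero_mul]
  split_ifs with h
  · rw [sum_eq_single ⟨i - 1, by omega⟩ (fun b _ hb => if_neg fun hb' => hb (Fin.ext (by
      simp only; omega))) (by simp)]
    simp only [if_pos (show (i : ℕ) = i - 1 + 1 by omega)]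
  · exact sum_eq_zero fun b _ => if_neg (by omega)

lemma lowerShift_pow_apply [Semiring R] (m : ℕ) (i j : Fin d) :
    (lowerShift R d ^ m) i j = if (i : ℕ) = j + m then 1 else 0 := by
  induction m generalizing i with
  | zero => simp [Matrix.one_apply, Fin.ext_iff]
  | succ m ih =>
    rw [pow_succ', lowerShift_mul_apply]
    by_cases h : 0 < (i : ℕ)
    · rw [dif_pos h, ih]
      exact if_congr (by simp only; omega) rfl rfl
    · rw [dif_neg h, if_neg (by omega)]

lemma lowerShift_pow_self [Semiring R] : lowerShift R d ^ d = 0 := by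
  ext i j
  rw [lowerShift_pow_apply, if_neg (by omega), Matrix.zero_apply]

lemma det_one_sub_smul_lowerShift [CommRing R] (c : R) : (1 - c • lowerShift R d).det = 1 := by
  rw [Matrix.det_of_isLowerTriangular _ fun i j (hij : i < j) => ?_]
  · exact prod_eq_one fun i _ => by simp [lowerShift]
  · simp [lowerShift, hij.ne, show (i : ℕ) ≠ j + 1 by omega]

lemma one_sub_smul_lowerShift_mul_geom_sum [CommRing R] (c : R) :
    (1 - c • lowerShift R d) * ∑ i ∈ range d, (c • lowerShift R d) ^ i = 1 := by
  rw [mul_neg_geom_sum, smul_pow, lowerShift_pow_self, smul_zero, sub_zero]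

end lowerShift

lemma one_sub_norm_le_norm_one_sub_pow {q : ℂ} (hq : ‖q‖ < 1) {n : ℕ} (hn : n ≠ 0) :
    1 - ‖q‖ ≤ ‖1 - q ^ n‖ :=
  calc 1 - ‖q‖ ≤ ‖(1 : ℂ)‖ - ‖q ^ n‖ := by
        rw [norm_one, norm_pow]; linarith [pow_le_of_le_one (norm_nonneg q) hq.le hn]
    _ ≤ ‖1 - q ^ n‖ := norm_sub_norm_le _ _

lemma pow_le_norm_qPochFin {q : ℂ} (hq : ‖q‖ < 1) (n : ℕ) :
    (1 - ‖q‖) ^ n ≤ ‖qPochFin q q n‖ := by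
  calc (1 - ‖q‖) ^ n = ∏ _k ∈ range n, (1 - ‖q‖) := by simp
    _ ≤ ∏ k ∈ range n, ‖1 - q ^ k * q‖ :=
        prod_le_prod (fun _ _ => by linarith) fun k _ => ?_
    _ = ‖qPochFin q q n‖ := (norm_prod _ _).symm
  rw [← pow_succ]
  exact one_sub_norm_le_norm_one_sub_pow hq k.succ_ne_zero

lemma qPochFin_ne_zero {q : ℂ} (hq : ‖q‖ < 1) (n : ℕ) : qPochFin q q n ≠ 0 :=
  norm_pos_iff.1 <| (pow_pos (by linarith) n).trans_le (pow_le_norm_qPochFin hq n)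

/-- Extending by zero to negative `m` absorbs the shift by `ε(k, ℓ)` in the entries of `U`
and `W`. -/
def qExpTerm (q y : ℂ) : ℤ → ℂ
  | (m : ℕ) => y ^ m / qPochFin q q m
  | Int.negSucc _ => 0

section qExpTerm

variable {q : ℂ}

@[simp]
lemma qExpTerm_natCast (y : ℂ) (m : ℕ) : qExpTerm q y m = y ^ m / qPochFin q q m := rfl

lemma qExpTerm_of_neg (y : ℂ) {m : ℤ} (hm : m < 0) : qExpTerm q y m = 0 := by
  obtain ⟨k, rfl⟩ := Int.exists_eq_neg_ofNat hm.le
  cases k with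
  | zero => omega
  | succ k => rfl

lemma qExpTerm_mul_left (y : ℂ) (m : ℤ) : qExpTerm q (q * y) m = q ^ m * qExpTerm q y m := by
  rcases lt_or_ge m 0 with hm | hm
  · simp [qExpTerm_of_neg _ hm]
  · lift m to ℕ using hm
    simp [mul_pow, mul_div_assoc]

lemma qExpTerm_sub_mul_left (hq : ‖q‖ < 1) (y : ℂ) (m : ℤ) :
    qExpTerm q y m - qExpTerm q (q * y) m = y * qExpTerm q y (m - 1) := by
  rcases lt_or_ge m 1 with hm | hm
  · rw [qExpTerm_of_neg _ (by omega : m - 1 < 0), mul_zero, qExpTerm_mul_left]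
    rcases lt_or_ge m 0 with hm' | hm'
    · simp [qExpTerm_of_neg _ hm']
    · obtain rfl : m = 0 := by omega
      simp
  · obtain ⟨M, rfl⟩ : ∃ M : ℕ, m = M + 1 := ⟨m.toNat - 1, by omega⟩
    have hP := qPochFin_ne_zero hq M
    have hQ : 1 - q ^ (M + 1) ≠ 0 :=
      norm_pos_iff.1 <| (by linarith : (0 : ℝ) < 1 - ‖q‖).trans_le
        (one_sub_norm_le_norm_one_sub_pow hq M.succ_ne_zero)
    rw [add_sub_cancel_right, show (M : ℤ) + 1 = ((M + 1 : ℕ) : ℤ) by push_cast; ring,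
      qExpTerm_natCast, qExpTerm_natCast, qExpTerm_natCast, qPochFin, prod_range_succ,
      ← qPochFin, ← pow_succ]
    field_simp
    ring

lemma qExpTerm_zero_left (m : ℤ) : qExpTerm q 0 m = if m = 0 then 1 else 0 := by
  rcases lt_or_ge m 0 with hm | hm
  · simp [qExpTerm_of_neg _ hm, hm.ne]
  · lift m to ℕ using hm
    rw [qExpTerm_natCast]
    cases m <;> simp [qPochFin]; omega

lemma norm_qExpTerm_le (hq : ‖q‖ < 1) (y : ℂ) (m : ℤ) :
    ‖qExpTerm q y m‖ ≤ (‖y‖ / (1 - ‖q‖)) ^ m.toNat := by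
  rcases lt_or_ge m 0 with hm | hm
  · simp [qExpTerm_of_neg _ hm, Int.toNat_of_nonpos hm.le]
  · lift m to ℕ using hm
    rw [qExpTerm_natCast, norm_div, norm_pow, div_pow, Int.toNat_natCast]
    exact div_le_div_of_nonneg_left (by positivity) (pow_pos (by linarith [norm_nonneg q]) m)
      (pow_le_norm_qPochFin hq m)

lemma continuous_qExpTerm (m : ℤ) : Continuous fun y => qExpTerm q y m := by
  rcases lt_or_ge m 0 with hm | hm
  · simp only [qExpTerm_of_neg _ hm]; exact continuous_const
  · lift m to ℕ using hm
    simpa using (continuous_pow m).div_const _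

end qExpTerm

def entryTerm (q α : ℂ) (d : ℕ) (E : ℕ → ℤ) (y : ℂ) (j : ℤ) (n : ℕ) : ℂ :=
  α ^ n * q ^ E n * qExpTerm q y (d * n + j)

def entrySeries (q α : ℂ) (d : ℕ) (E : ℕ → ℤ) (y : ℂ) (j : ℤ) : ℂ :=
  ∑' n, entryTerm q α d E y j n

section entrySeries

variable {q α : ℂ} {d : ℕ} {E : ℕ → ℤ}

lemma norm_entryTerm_le (hq1 : ‖q‖ < 1) {y : ℂ} {r : ℝ} (hy : ‖y‖ ≤ r) (j : ℤ) (n : ℕ) :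
    ‖entryTerm q α d E y j n‖ ≤
      (1 + r / (1 - ‖q‖)) ^ j.toNat * ((‖α‖ * (1 + r / (1 - ‖q‖)) ^ d) ^ n * ‖q‖ ^ E n) := by
  set R := 1 + r / (1 - ‖q‖)
  have hq' : 0 < 1 - ‖q‖ := by linarith
  have hR : 1 ≤ R := le_add_of_nonneg_right (div_nonneg ((norm_nonneg y).trans hy) hq'.le)
  have hexp : ‖qExpTerm q y (d * n + j)‖ ≤ R ^ j.toNat * (R ^ d) ^ n :=
    calc ‖qExpTerm q y (d * n + j)‖ ≤ (‖y‖ / (1 - ‖q‖)) ^ (d * n + j).toNat :=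
          norm_qExpTerm_le hq1 _ _
      _ ≤ R ^ (d * n + j).toNat := by
          gcongr
          exact (div_le_div_of_nonneg_right hy hq'.le).trans (le_add_of_nonneg_left zero_le_one)
      _ ≤ R ^ (j.toNat + d * n) := pow_le_pow_right₀ hR (by omega)
      _ = R ^ j.toNat * (R ^ d) ^ n := by rw [pow_add, pow_mul]
  rw [entryTerm, norm_mul, norm_mul, norm_pow, norm_zpow]
  calc ‖α‖ ^ n * ‖q‖ ^ E n * ‖qExpTerm q y (d * n + j)‖
      ≤ ‖α‖ ^ n * ‖q‖ ^ E n * (R ^ j.toNat * (R ^ d) ^ n) := by gcongr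
    _ = R ^ j.toNat * ((‖α‖ * R ^ d) ^ n * ‖q‖ ^ E n) := by ring

lemma summable_entryTerm (hq0 : q ≠ 0) (hq1 : ‖q‖ < 1)
    (hE : Tendsto (fun n => E (n + 1) - E n) atTop atTop) (y : ℂ) (j : ℤ) :
    Summable (entryTerm q α d E y j) :=
  .of_norm_bounded ((summable_pow_mul_zpow _ (norm_pos_iff.2 hq0) hq1 hE).mul_left _)
    (norm_entryTerm_le hq1 le_rfl j)

lemma entrySeries_sub_mul_left (hq0 : q ≠ 0) (hq1 : ‖q‖ < 1)
    (hE : Tendsto (fun n => E (n + 1) - E n) atTop atTop) (y : ℂ) (j : ℤ) :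
    entrySeries q α d E y j - entrySeries q α d E (q * y) j =
      y * entrySeries q α d E y (j - 1) := by
  rw [entrySeries, entrySeries, entrySeries, ← (summable_entryTerm hq0 hq1 hE y j).tsum_sub
    (summable_entryTerm hq0 hq1 hE (q * y) j), ← tsum_mul_left]
  refine tsum_congr fun n => ?_
  rw [entryTerm, entryTerm, entryTerm, ← mul_sub, qExpTerm_sub_mul_left hq1, add_sub_assoc]
  ring

lemma entrySeries_of_neg (hq0 : q ≠ 0) (hq1 : ‖q‖ < 1)
    (hE : Tendsto (fun n => E (n + 1) - E n) atTop atTop) (y : ℂ) {j : ℤ} (hj : j < 0) :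
    entrySeries q α d E y j = α * entrySeries q α d (fun n => E (n + 1)) y (j + d) := by
  rw [entrySeries, (summable_entryTerm hq0 hq1 hE y j).tsum_eq_zero_add, entrySeries,
    ← tsum_mul_left, entryTerm, Nat.cast_zero, mul_zero, zero_add, qExpTerm_of_neg _ hj,
    mul_zero, zero_add]
  refine tsum_congr fun n => ?_
  rw [entryTerm, entryTerm, show (d : ℤ) * ↑(n + 1) + j = d * n + (j + d) by push_cast; ring,
    pow_succ]
  ring

lemma continuousAt_entrySeries (hq0 : q ≠ 0) (hq1 : ‖q‖ < 1)
    (hE : Tendsto (fun n => E (n + 1) - E n) atTop atTop) (j : ℤ) :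
    ContinuousAt (fun y => entrySeries q α d E y j) 0 := by
  have hcont : ContinuousOn (fun y => entrySeries q α d E y j) (Metric.closedBall 0 1) :=
    continuousOn_tsum (fun n => (continuous_const.mul (continuous_qExpTerm _)).continuousOn)
      ((summable_pow_mul_zpow _ (norm_pos_iff.2 hq0) hq1 hE).mul_left _)
      fun n y hy => norm_entryTerm_le hq1 (by simpa using hy) j n
  exact hcont.continuousAt (Metric.closedBall_mem_nhds 0 one_pos)

lemma entrySeries_mul_left (hq0 : q ≠ 0) (y : ℂ) (j : ℤ) :
    entrySeries q α d E (q * y) j = entrySeries q α d (fun n => E n + (d * n + j)) y j := by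
  refine tsum_congr fun n => ?_
  rw [entryTerm, entryTerm, qExpTerm_mul_left, zpow_add₀ hq0 (E n)]
  ring

lemma entrySeries_add_const (hq0 : q ≠ 0) (c : ℤ) (y : ℂ) (j : ℤ) :
    entrySeries q α d (fun n => E n + c) y j = q ^ c * entrySeries q α d E y j := by
  rw [entrySeries, entrySeries, ← tsum_mul_left]
  refine tsum_congr fun n => ?_
  rw [entryTerm, entryTerm, zpow_add₀ hq0]
  ring

end entrySeries

lemma entrySeries_zero_left {q α : ℂ} {d : ℕ} (E : ℕ → ℤ) (hd : 0 < d) {j : ℤ}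
    (hj : -(d : ℤ) < j) : entrySeries q α d E 0 j = if j = 0 then q ^ E 0 else 0 := by
  rw [entrySeries, tsum_eq_single 0 fun n hn => ?_]
  · split_ifs with h <;> simp [entryTerm, qExpTerm_zero_left, h]
  · have : (d : ℤ) * n + j ≠ 0 := by
      have : (d : ℤ) ≤ d * n := le_mul_of_one_le_right (by positivity) (by omega)
      omega
    simp [entryTerm, qExpTerm_zero_left, this]

lemma tsum_add_eps {d : ℕ} (k l : Fin d) (f : ℕ → ℂ) (hf : k < l → f 0 = 0) :
    ∑' n, f (n + eps k l) = ∑' n, f n := by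
  unfold eps
  split_ifs with h
  · refine (add_left_injective 1).tsum_eq fun n hn => ?_
    cases n with
    | zero => exact absurd (hf h) hn
    | succ n => exact ⟨n, rfl⟩
  · simp

lemma le_mul_add_eps {d : ℕ} (k l : Fin d) (n : ℕ) : (l : ℕ) ≤ d * (n + eps k l) + k := by
  unfold eps
  split_ifs with h
  · nlinarith [l.isLt]
  · have : (l : ℕ) ≤ k := not_lt.1 h
    nlinarith

def uExponent (d k n : ℕ) : ℤ := ((d * (n * (n - 1) / 2) + k * n : ℕ) : ℤ)

def wExponent (d k l n : ℕ) : ℤ :=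
  ((d * (d - 1) / 2 : ℕ) : ℤ) * (n : ℤ) ^ 2 + ((d : ℤ) * ((k : ℤ) - (l : ℤ) - 1) + (l : ℤ)) * n +
    ((k : ℤ) - (l : ℤ)) * (((k : ℤ) - (l : ℤ)) - 1) / 2

lemma uExponent_succ (d k n : ℕ) : uExponent d k (n + 1) = uExponent d k n + (d * n + k) := by
  simp only [uExponent, ← Nat.choose_two_right, Nat.choose_succ_succ', Nat.choose_one_right]
  push_cast
  ring

lemma wExponent_succ_left (d k l n : ℕ) :
    wExponent d (k + 1) l n = wExponent d k l n + (d * n + (k - l)) := by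
  have hhalf : ((k : ℤ) + 1 - l) * ((k : ℤ) + 1 - l - 1) / 2 =
      (k - l) * (k - l - 1) / 2 + (k - l) := by
    rw [show ((k : ℤ) + 1 - l) * ((k : ℤ) + 1 - l - 1) = (k - l) * (k - l - 1) + (k - l) * 2 by
      ring, Int.add_mul_ediv_right _ _ two_ne_zero]
  simp only [wExponent]
  push_cast
  rw [hhalf]
  ring

lemma wExponent_zero_succ {d : ℕ} (hd : 1 ≤ d) (l n : ℕ) :
    wExponent d 0 l (n + 1) = wExponent d (d - 1) l n + -1 := by
  -- the divisions by `2` are exact, so compare twice both sides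
  have hD : 2 * ((d * (d - 1) / 2 : ℕ) : ℤ) = d * (d - 1) := by
    rw [← Nat.cast_two, ← Nat.cast_mul, Nat.two_mul_div_two_of_even (Nat.even_mul_pred_self d)]
    push_cast [hd]; ring
  have h0 := Int.two_mul_ediv_two_of_even (Int.even_mul_pred_self (0 - l : ℤ))
  have h1 := Int.two_mul_ediv_two_of_even (Int.even_mul_pred_self (((d - 1 : ℕ) : ℤ) - l))
  refine mul_left_cancel₀ (two_ne_zero (α := ℤ)) ?_
  simp only [wExponent]
  generalize ((d * (d - 1) / 2 : ℕ) : ℤ) = D at hD ⊢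
  push_cast [hd] at h0 h1 ⊢
  linear_combination (2 * (n : ℤ) + 1) * hD + h0 - h1

lemma tendsto_uExponent_sub {d : ℕ} (hd : 1 ≤ d) (k : ℕ) :
    Tendsto (fun n => uExponent d k (n + 1) - uExponent d k n) atTop atTop := by
  simp only [uExponent_succ, add_sub_cancel_left]
  refine tendsto_atTop_mono (fun n => ?_) (tendsto_natCast_atTop_atTop (R := ℤ))
  have : (1 : ℤ) ≤ d := by exact_mod_cast hd
  nlinarith [Int.natCast_nonneg n, Int.natCast_nonneg k]

lemma tendsto_wExponent_sub {d : ℕ} (hd : 2 ≤ d) (k l : ℕ) :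
    Tendsto (fun n => wExponent d k l (n + 1) - wExponent d k l n) atTop atTop := by
  have hD : (1 : ℤ) ≤ ((d * (d - 1) / 2 : ℕ) : ℤ) := by
    have : 2 ≤ d * (d - 1) := Nat.mul_le_mul hd (by omega : 1 ≤ d - 1)
    exact_mod_cast (by omega : 1 ≤ d * (d - 1) / 2)
  refine tendsto_atTop_mono (fun n => ?_) (tendsto_atTop_add_const_right _
    ((d : ℤ) * ((k : ℤ) - l - 1) + l) (tendsto_natCast_atTop_atTop (R := ℤ)))
  simp only [wExponent]
  generalize ((d * (d - 1) / 2 : ℕ) : ℤ) = D at hD ⊢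
  push_cast
  nlinarith [Int.natCast_nonneg n]

section entries

variable (q α y : ℂ) {d : ℕ} (k l : Fin d)

lemma Umat_apply : Umat q α y d k l = entrySeries q α d (uExponent d k) y (k - l) := by
  rw [Umat, Matrix.of_apply, entrySeries, ← tsum_add_eps k l (entryTerm q α d _ y _) fun h => ?_]
  · refine tsum_congr fun n => ?_
    have hm : (d : ℤ) * ↑(n + eps k l) + (↑↑k - ↑↑l) = ↑(d * (n + eps k l) + ↑k - ↑l) := by
      push_cast [le_mul_add_eps k l n]; ring
    rw [entryTerm, uExponent, zpow_natCast, hm, qExpTerm_natCast, mul_div_assoc]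
  · rw [entryTerm, qExpTerm_of_neg _ (by simp; omega), mul_zero]

lemma Wmat_apply : Wmat q α y d k l = entrySeries q α d (wExponent d k l) (-y) (k - l) := by
  rw [Wmat, Matrix.of_apply, entrySeries, ← tsum_add_eps k l (entryTerm q α d _ (-y) _) fun h => ?_]
  · refine tsum_congr fun n => ?_
    have hm : (d : ℤ) * ↑(n + eps k l) + (↑↑k - ↑↑l) = ↑(d * (n + eps k l) + ↑k - ↑l) := by
      push_cast [le_mul_add_eps k l n]; ring
    rw [entryTerm, wExponent, hm, qExpTerm_natCast, mul_div_assoc]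
  · rw [entryTerm, qExpTerm_of_neg _ (by simp; omega), mul_zero]

end entries

section qDifference

variable {q α : ℂ} {d : ℕ}

lemma Umat_mul_one_sub_smul_lowerShift (hq0 : q ≠ 0) (hq1 : ‖q‖ < 1) {i₀ i₁ : Fin d}
    (h₀ : (i₀ : ℕ) = 0) (h₁ : (i₁ : ℕ) = d - 1) (y : ℂ) :
    Umat q α y d * (1 - y • lowerShift ℂ d) =
      Umat q α (q * y) d * Matrix.transvection i₀ i₁ (α * y) := by
  ext k l
  have hk := k.isLt
  have hE := tendsto_uExponent_sub (by omega : 1 ≤ d) k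
  rw [Matrix.mul_sub, Matrix.mul_one, Matrix.mul_smul, Matrix.sub_apply, Matrix.smul_apply,
    smul_eq_mul, mul_lowerShift_apply]
  by_cases hl : (l : ℕ) = d - 1
  · rw [dif_neg (by omega), mul_zero, sub_zero, show l = i₁ from Fin.ext (hl.trans h₁.symm),
      Matrix.mul_transvection_apply_same, Umat_apply, Umat_apply, Umat_apply, h₀, h₁]
    have hshift : entrySeries q α d (fun n => uExponent d k (n + 1)) y (k - (d - 1 : ℕ) - 1 + d) =
        entrySeries q α d (uExponent d k) (q * y) (k - (0 : ℕ)) := by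
      rw [entrySeries_mul_left hq0]
      congr 1
      · ext n; rw [uExponent_succ]; simp
      · push_cast [show 1 ≤ d by omega]; ring
    have := entrySeries_sub_mul_left (α := α) (d := d) hq0 hq1 hE y (k - (d - 1 : ℕ))
    rw [entrySeries_of_neg hq0 hq1 hE y (j := (k : ℤ) - (d - 1 : ℕ) - 1) (by omega), hshift]
      at this
    linear_combination this
  · have hl' : (l : ℕ) + 1 < d := by omega
    rw [dif_pos hl', Matrix.mul_transvection_apply_of_ne _ _ k l fun h => hl (h ▸ h₁),
      Umat_apply, Umat_apply, Umat_apply]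
    have := entrySeries_sub_mul_left (α := α) (d := d) hq0 hq1 hE y (k - l)
    simp only [Nat.cast_add, Nat.cast_one, ← sub_sub] at this ⊢
    linear_combination this

lemma transvection_mul_Wmat (hq0 : q ≠ 0) (hq1 : ‖q‖ < 1) (hd : 2 ≤ d) {i₀ i₁ : Fin d}
    (h₀ : (i₀ : ℕ) = 0) (h₁ : (i₁ : ℕ) = d - 1) (y : ℂ) :
    Matrix.transvection i₀ i₁ (α * y / q) * Wmat q α y d =
      (1 - y • lowerShift ℂ d) * Wmat q α (q * y) d := by
  ext k l
  rw [Matrix.sub_mul, Matrix.one_mul, Matrix.smul_mul, Matrix.sub_apply, Matrix.smul_apply,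
    smul_eq_mul, lowerShift_mul_apply]
  have hl := l.isLt
  by_cases hk : (k : ℕ) = 0
  · rw [dif_neg (by omega), mul_zero, sub_zero, show k = i₀ from Fin.ext (hk.trans h₀.symm),
      Matrix.transvection_mul_apply_same, Wmat_apply, Wmat_apply, Wmat_apply, ← mul_neg, h₀, h₁]
    have hE := tendsto_wExponent_sub hd 0 l
    have hshift : entrySeries q α d (fun n => wExponent d 0 l (n + 1)) (-y) ((0 : ℕ) - l - 1 + d) =
        q ^ (-1 : ℤ) * entrySeries q α d (wExponent d (d - 1) l) (-y) ((d - 1 : ℕ) - l) := by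
      rw [← entrySeries_add_const hq0]
      congr 1
      · ext n; exact wExponent_zero_succ (by omega) l n
      · push_cast [show 1 ≤ d by omega]; ring
    have := entrySeries_sub_mul_left (α := α) (d := d) hq0 hq1 hE (-y) ((0 : ℕ) - l)
    rw [entrySeries_of_neg hq0 hq1 hE (-y) (j := (0 : ℕ) - l - 1) (by omega), hshift,
      zpow_neg_one] at this
    linear_combination this
  · obtain ⟨k', hk'⟩ : ∃ k', (k : ℕ) = k' + 1 := ⟨k - 1, by omega⟩
    rw [dif_pos (by omega), Matrix.transvection_mul_apply_of_ne _ _ k l fun h => hk (h ▸ h₀),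
      Wmat_apply, Wmat_apply, Wmat_apply, ← mul_neg]
    simp only [hk', Nat.add_sub_cancel]
    have hE := tendsto_wExponent_sub hd (k' + 1) l
    have hshift : entrySeries q α d (wExponent d k' l) (q * -y) (k' - l) =
        entrySeries q α d (wExponent d (k' + 1) l) (-y) ((k' + 1 : ℕ) - l - 1) := by
      rw [entrySeries_mul_left hq0]
      congr 1
      · ext n; rw [wExponent_succ_left]
      · push_cast; ring
    have := entrySeries_sub_mul_left (α := α) (d := d) hq0 hq1 hE (-y) ((k' + 1 : ℕ) - l)
    rw [← hshift] at this
    linear_combination this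

end qDifference

section limits

variable {q α : ℂ} {d : ℕ}

lemma continuousAt_Umat (hq0 : q ≠ 0) (hq1 : ‖q‖ < 1) :
    ContinuousAt (fun y => Umat q α y d) 0 := by
  refine continuousAt_pi.2 fun k => continuousAt_pi.2 fun l => ?_
  simp only [Umat_apply]
  exact continuousAt_entrySeries hq0 hq1 (tendsto_uExponent_sub (by have := k.isLt; omega) k) _

lemma continuousAt_Wmat (hq0 : q ≠ 0) (hq1 : ‖q‖ < 1) (hd : 2 ≤ d) :
    ContinuousAt (fun y => Wmat q α y d) 0 := by
  refine continuousAt_pi.2 fun k => continuousAt_pi.2 fun l => ?_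
  simp only [Wmat_apply]
  exact (continuousAt_entrySeries hq0 hq1 (tendsto_wExponent_sub hd k l) _).comp_of_eq
    continuousAt_neg neg_zero

lemma Umat_zero : Umat q α 0 d = 1 := by
  ext k l
  have := k.isLt
  rw [Umat_apply, entrySeries_zero_left _ (by omega) (by omega), Matrix.one_apply]
  simp [uExponent, sub_eq_zero, Fin.ext_iff]

lemma Wmat_zero : Wmat q α 0 d = 1 := by
  ext k l
  have := k.isLt
  rw [Wmat_apply, neg_zero, entrySeries_zero_left _ (by omega) (by omega), Matrix.one_apply]
  by_cases h : k = l
  · simp [h, wExponent]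
  · simp [h, sub_eq_zero, Fin.val_ne_of_ne h]

end limits

section determinants

variable {q α : ℂ} {d : ℕ}

lemma det_Umat (hq0 : q ≠ 0) (hq1 : ‖q‖ < 1) (hd : 2 ≤ d) (y : ℂ) : (Umat q α y d).det = 1 := by
  have hd0 : 0 < d := by linarith
  have hstep : ∀ z, (Umat q α (q * z) d).det = (Umat q α z d).det := fun z => by
    have := congrArg Matrix.det <| Umat_mul_one_sub_smul_lowerShift (α := α) hq0 hq1
      (i₀ := ⟨0, hd0⟩) (i₁ := ⟨d - 1, Nat.sub_lt hd0 one_pos⟩) rfl rfl z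
    rwa [Matrix.det_mul, Matrix.det_mul, det_one_sub_smul_lowerShift,
      Matrix.det_transvection_of_ne _ _ (by simp; omega), mul_one, mul_one, eq_comm] at this
  rw [apply_eq_apply_zero_of_apply_mul_eq hq1 (f := fun z => (Umat q α z d).det) hstep
    ((continuous_id.matrix_det).continuousAt.comp (continuousAt_Umat hq0 hq1)) y,
    Umat_zero, Matrix.det_one]

lemma det_Wmat (hq0 : q ≠ 0) (hq1 : ‖q‖ < 1) (hd : 2 ≤ d) (y : ℂ) : (Wmat q α y d).det = 1 := by
  have hd0 : 0 < d := by linarith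
  have hstep : ∀ z, (Wmat q α (q * z) d).det = (Wmat q α z d).det := fun z => by
    have := congrArg Matrix.det <| transvection_mul_Wmat (α := α) hq0 hq1 hd
      (i₀ := ⟨0, hd0⟩) (i₁ := ⟨d - 1, Nat.sub_lt hd0 one_pos⟩) rfl rfl z
    rwa [Matrix.det_mul, Matrix.det_mul, det_one_sub_smul_lowerShift,
      Matrix.det_transvection_of_ne _ _ (by simp; omega), one_mul, one_mul, eq_comm] at this
  rw [apply_eq_apply_zero_of_apply_mul_eq hq1 (f := fun z => (Wmat q α z d).det) hstep
    ((continuous_id.matrix_det).continuousAt.comp (continuousAt_Wmat hq0 hq1 hd)) y,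
    Wmat_zero, Matrix.det_one]

end determinants

section product

variable {q α : ℂ} {d : ℕ} {i₀ i₁ : Fin d}

lemma Wmat_mul_Umat_sub_eq (hq0 : q ≠ 0) (hq1 : ‖q‖ < 1) (hd : 2 ≤ d) (h₀ : (i₀ : ℕ) = 0)
    (h₁ : (i₁ : ℕ) = d - 1) (z : ℂ) :
    Wmat q α z d * Umat q α z d - Matrix.transvection i₀ i₁ (-α * z / q) =
      (Matrix.transvection i₀ i₁ (-α * z / q) * (1 - z • lowerShift ℂ d)) *
        (Wmat q α (q * z) d * Umat q α (q * z) d -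
          Matrix.transvection i₀ i₁ (-α * (q * z) / q)) *
        (Matrix.transvection i₀ i₁ (α * z) * ∑ i ∈ range d, (z • lowerShift ℂ d) ^ i) := by
  have hne : i₀ ≠ i₁ := fun h => by rw [h] at h₀; omega
  have hW : Wmat q α z d =
      Matrix.transvection i₀ i₁ (-α * z / q) * (1 - z • lowerShift ℂ d) * Wmat q α (q * z) d := by
    rw [mul_assoc, ← transvection_mul_Wmat hq0 hq1 hd h₀ h₁, ← mul_assoc,
      Matrix.transvection_mul_transvection_same _ _ hne, show -α * z / q + α * z / q = 0 by ring,
      Matrix.transvection_zero, one_mul]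
  have hU : Umat q α z d = Umat q α (q * z) d * Matrix.transvection i₀ i₁ (α * z) *
      ∑ i ∈ range d, (z • lowerShift ℂ d) ^ i := by
    rw [← Umat_mul_one_sub_smul_lowerShift hq0 hq1 h₀ h₁, mul_assoc,
      one_sub_smul_lowerShift_mul_geom_sum, mul_one]
  have hG : Matrix.transvection i₀ i₁ (-α * z / q) * (1 - z • lowerShift ℂ d) *
      (Matrix.transvection i₀ i₁ (-α * (q * z) / q) * Matrix.transvection i₀ i₁ (α * z)) *
      ∑ i ∈ range d, (z • lowerShift ℂ d) ^ i = Matrix.transvection i₀ i₁ (-α * z / q) := by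
    rw [Matrix.transvection_mul_transvection_same _ _ hne,
      show -α * (q * z) / q + α * z = 0 by field_simp; ring, Matrix.transvection_zero, mul_one,
      mul_assoc, one_sub_smul_lowerShift_mul_geom_sum, mul_one]
  calc Wmat q α z d * Umat q α z d - Matrix.transvection i₀ i₁ (-α * z / q)
      = Matrix.transvection i₀ i₁ (-α * z / q) * (1 - z • lowerShift ℂ d) * Wmat q α (q * z) d *
          (Umat q α (q * z) d * Matrix.transvection i₀ i₁ (α * z) *
            ∑ i ∈ range d, (z • lowerShift ℂ d) ^ i) -
        Matrix.transvection i₀ i₁ (-α * z / q) * (1 - z • lowerShift ℂ d) *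
          (Matrix.transvection i₀ i₁ (-α * (q * z) / q) * Matrix.transvection i₀ i₁ (α * z)) *
          ∑ i ∈ range d, (z • lowerShift ℂ d) ^ i := by rw [← hW, ← hU, hG]
    _ = _ := by noncomm_ring

attribute [local instance] Matrix.linftyOpNormedRing Matrix.linftyOpNormedAlgebra

lemma exists_norm_Wmat_mul_Umat_sub_le (hq0 : q ≠ 0) (hq1 : ‖q‖ < 1) (hd : 2 ≤ d)
    (h₀ : (i₀ : ℕ) = 0) (h₁ : (i₁ : ℕ) = d - 1) :
    ∃ C : ℝ, ∀ z : ℂ,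
      ‖Wmat q α z d * Umat q α z d - Matrix.transvection i₀ i₁ (-α * z / q)‖ ≤
        Real.exp (C * ‖z‖) * ‖Wmat q α (q * z) d * Umat q α (q * z) d -
          Matrix.transvection i₀ i₁ (-α * (q * z) / q)‖ := by
  set E : Matrix (Fin d) (Fin d) ℂ := Matrix.single i₀ i₁ 1
  set N := lowerShift ℂ d
  have : Nonempty (Fin d) := ⟨i₀⟩
  have hτ : ∀ c : ℂ, ‖Matrix.transvection i₀ i₁ c‖ ≤ Real.exp (‖c‖ * ‖E‖) := fun c => by
    rw [Matrix.transvection_eq_one_add_smul]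
    exact norm_one_add_smul_le_exp c E
  have hT : ∀ z : ℂ, ‖1 - z • N‖ ≤ Real.exp (‖z‖ * ‖N‖) := fun z => by
    simpa [sub_eq_add_neg, ← neg_smul] using norm_one_add_smul_le_exp (-z) N
  have hTinv : ∀ z : ℂ, ‖∑ i ∈ range d, (z • N) ^ i‖ ≤ Real.exp (d * (‖z‖ * ‖N‖)) := fun z =>
    (norm_geom_sum_le_exp _ d).trans (by gcongr; exact norm_smul_le z N)
  refine ⟨‖α‖ / ‖q‖ * ‖E‖ + ‖N‖ + ‖α‖ * ‖E‖ + d * ‖N‖, fun z => ?_⟩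
  have hleft : ‖Matrix.transvection i₀ i₁ (-α * z / q) * (1 - z • N)‖ ≤
      Real.exp (‖-α * z / q‖ * ‖E‖) * Real.exp (‖z‖ * ‖N‖) :=
    (norm_mul_le _ _).trans (mul_le_mul (hτ _) (hT z) (norm_nonneg _) (by positivity))
  have hright : ‖Matrix.transvection i₀ i₁ (α * z) * ∑ i ∈ range d, (z • N) ^ i‖ ≤
      Real.exp (‖α * z‖ * ‖E‖) * Real.exp (d * (‖z‖ * ‖N‖)) :=
    (norm_mul_le _ _).trans (mul_le_mul (hτ _) (hTinv z) (norm_nonneg _) (by positivity))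
  rw [Wmat_mul_Umat_sub_eq hq0 hq1 hd h₀ h₁ z]
  refine (norm_mul_le _ _).trans ((mul_le_mul_of_nonneg_right (norm_mul_le _ _)
    (norm_nonneg _)).trans ?_)
  refine (mul_le_mul (mul_le_mul_of_nonneg_right hleft (norm_nonneg _)) hright (norm_nonneg _)
    (by positivity)).trans_eq ?_
  simp only [← Real.exp_add, norm_mul, norm_div, norm_neg]
  rw [mul_right_comm, ← Real.exp_add]
  congr 2
  ring

lemma Wmat_mul_Umat (hq0 : q ≠ 0) (hq1 : ‖q‖ < 1) (hd : 2 ≤ d) (h₀ : (i₀ : ℕ) = 0)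
    (h₁ : (i₁ : ℕ) = d - 1) (y : ℂ) :
    Wmat q α y d * Umat q α y d = Matrix.transvection i₀ i₁ (-α * y / q) := by
  obtain ⟨C, hC⟩ := exists_norm_Wmat_mul_Umat_sub_le (α := α) hq0 hq1 hd h₀ h₁
  have hcont : ContinuousAt (fun z => Wmat q α z d * Umat q α z d -
      Matrix.transvection i₀ i₁ (-α * z / q)) 0 := by
    refine ((continuousAt_Wmat hq0 hq1 hd).mul (continuousAt_Umat hq0 hq1)).sub ?_
    simp only [Matrix.transvection_eq_one_add_smul]
    fun_prop
  refine sub_eq_zero.1 (eq_zero_of_norm_le_exp_mul_norm_mul hq1 hC ?_ y)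
  have h0 := hcont.tendsto
  simp only [Wmat_zero, Umat_zero, mul_zero, zero_div,
    Matrix.transvection_zero, mul_one, sub_self] at h0
  exact h0

end product

/-- Change-of-basis identities (Theorem 5.12). -/
theorem change_of_basis (q α y : ℂ) (hq0 : 0 < ‖q‖)
    (hq1 : ‖q‖ < 1) (d : ℕ) (hd : 2 ≤ d) :
    (Umat q α y d).det = 1 ∧ (Wmat q α y d).det = 1 ∧
    Wmat q α y d * Umat q α y d =
      1 + Matrix.single (⟨0, by omega⟩ : Fin d) (⟨d - 1, by omega⟩ : Fin d)
        (-α * y / q) := by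
  have hq : q ≠ 0 := norm_pos_iff.1 hq0
  exact ⟨det_Umat hq hq1 hd y, det_Wmat hq hq1 hd y, Wmat_mul_Umat hq hq1 hd rfl rfl y⟩

end
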